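/- For paths without loops, st_+(P_{2k}) = st_+(P_{2k+1}) = 2k for every k ≥ 1, where P_n denotes the path on n vertices. -/

import Mathlib

open Matrix

/-- A finite simple undirected graph that allows loops: a symmetric adjacency
relation on the vertex type. -/
structure LGraph (V : Type*) where
  /-- the adjacency relation; `Adj v v` means a loop at `v`. -/
  Adj : V → V → Prop
  /-- adjacency is symmetric -/
  symm : ∀ {u v : V}, Adj u v → Adj v u

namespace LGraph

variable {V W : Type*}

/-- `𝒞` is a set-join cover of `G`: all components are nonempty subsets of the
vertex set, and the union of the edge sets of the set-joins `K ∨ L` in `𝒞` is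
exactly the edge set of `G`. A set-join is represented as an unordered pair
`s(K, L)` of subsets of the vertex set. -/
def IsSetJoinCover (G : LGraph V) (𝒞 : Set (Sym2 (Set V))) : Prop :=
  (∀ p ∈ 𝒞, ∀ K ∈ p, (K : Set V).Nonempty) ∧
    ∀ u v : V, G.Adj u v ↔ ∃ p ∈ 𝒞, ∃ K L : Set V, p = s(K, L) ∧ u ∈ K ∧ v ∈ L

/-- The component set `V(𝒞)` of a set-join cover: all subsets of the vertex set
appearing as a component of some set-join in `𝒞`. -/
def comps (𝒞 : Set (Sym2 (Set V))) : Set (Set V) :=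
  {K : Set V | ∃ p ∈ 𝒞, K ∈ p}

/-- The order `|𝒞|` of a set-join cover: the number of its components. -/
noncomputable def coverOrder (𝒞 : Set (Sym2 (Set V))) : ℕ :=
  (comps 𝒞).ncard

/-- The SNT-rank `st₊(G)` of a graph: the minimal order of a set-join cover of `G`. -/
noncomputable def st (G : LGraph V) : ℕ :=
  sInf {k : ℕ | ∃ 𝒞 : Set (Sym2 (Set V)), G.IsSetJoinCover 𝒞 ∧ coverOrder 𝒞 = k}

/-- An optimal set-join cover (OSJ cover): a set-join cover of order `st₊(G)`. -/
def IsOptimalCover (G : LGraph V) (𝒞 : Set (Sym2 (Set V))) : Prop :=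
  G.IsSetJoinCover 𝒞 ∧ coverOrder 𝒞 = G.st

/-- The graph `G(𝒞)` of a set-join cover: vertices are the components, and two
components `K`, `L` are adjacent iff the set-join `K ∨ L` belongs to `𝒞`. -/
def coverGraph (𝒞 : Set (Sym2 (Set V))) : LGraph (comps 𝒞) where
  Adj K L := s((K : Set V), (L : Set V)) ∈ 𝒞
  symm := by
    intro K L h
    rwa [Sym2.eq_swap] at h

/-- The neighbourhood of a vertex (`v ∈ neighborSet v` iff `v` has a loop). -/
def neighborSet (G : LGraph V) (v : V) : Set V := {w | G.Adj v w}

/-- The induced subgraph on a set of vertices. -/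
def induce (G : LGraph V) (S : Set V) : LGraph S where
  Adj a b := G.Adj (a : V) (b : V)
  symm := by intro a b h; exact G.symm h

/-- Adjacency for the disjoint union of two graphs. -/
def disjUnionAdj (G : LGraph V) (H : LGraph W) : V ⊕ W → V ⊕ W → Prop
  | Sum.inl a, Sum.inl b => G.Adj a b
  | Sum.inr a, Sum.inr b => H.Adj a b
  | _, _ => False

/-- The disjoint union `G ∪ H` of two graphs. -/
def disjUnion (G : LGraph V) (H : LGraph W) : LGraph (V ⊕ W) where
  Adj := disjUnionAdj G H
  symm := by
    rintro (a | a) (b | b) h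
    · exact G.symm h
    · exact h.elim
    · exact h.elim
    · exact H.symm h

/-- The graph with no edges on vertex type `V`. -/
def emptyGraph (V : Type*) : LGraph V where
  Adj _ _ := False
  symm := by intro u v h; exact h

/-- Adjacency for the join of a graph with a single looped vertex `none`. -/
def joinK1ℓAdj (G : LGraph V) : Option V → Option V → Prop
  | some a, some b => G.Adj a b
  | _, _ => True

/-- The join `G ∨ K₁ˡ` of `G` with a single looped vertex (the vertex `none`). -/
def joinK1ℓ (G : LGraph V) : LGraph (Option V) where
  Adj := joinK1ℓAdj G
  symm := by
    rintro (_ | a) (_ | b) h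
    · trivial
    · trivial
    · trivial
    · exact G.symm h

/-- The complete loopless graph `Kₙ` on `Fin n`. -/
def completeGraph (n : ℕ) : LGraph (Fin n) where
  Adj i j := i ≠ j
  symm := by intro i j h; exact h.symm

/-- The path `Pₙ` on `n` vertices (no loops). -/
def pathGraph (n : ℕ) : LGraph (Fin n) where
  Adj i j := (i : ℕ) + 1 = (j : ℕ) ∨ (j : ℕ) + 1 = (i : ℕ)
  symm := by intro i j h; exact h.symm

/-- The cycle `Cₙ` on `n` vertices (no loops), for `n ≥ 3`. -/
def cycleGraph (n : ℕ) : LGraph (Fin n) where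
  Adj i j := ((i : ℕ) + 1) % n = (j : ℕ) ∨ ((j : ℕ) + 1) % n = (i : ℕ)
  symm := by intro i j h; exact h.symm

/-- Adjacency for the generalised star: the centre is `none`, and `some ⟨i, j⟩`
is the vertex at distance `j + 1` from the centre on arm `i`. -/
def genStarAdj (t : ℕ) (k : Fin t → ℕ) :
    Option ((i : Fin t) × Fin (k i)) → Option ((i : Fin t) × Fin (k i)) → Prop
  | none, none => False
  | none, some ⟨_, j⟩ => (j : ℕ) = 0
  | some ⟨_, j⟩, none => (j : ℕ) = 0
  | some ⟨i, j⟩, some ⟨i', j'⟩ => i = i' ∧ ((j : ℕ) + 1 = (j' : ℕ) ∨ (j' : ℕ) + 1 = (j : ℕ))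

/-- The generalised star `star(k₁, …, k_t)` with central vertex `none` and `t`
arms, the `i`-th arm being a path with `k i` edges emanating from the centre. -/
def genStar (t : ℕ) (k : Fin t → ℕ) : LGraph (Option ((i : Fin t) × Fin (k i))) where
  Adj := genStarAdj t k
  symm := by
    rintro (_ | ⟨i, j⟩) (_ | ⟨i', j'⟩) h
    · exact h.elim
    · exact h
    · exact h
    · exact ⟨h.1.symm, h.2.symm⟩

/-- A loopless leaf: a vertex with exactly one neighbour and no loop. -/
def LooplessLeaf (G : LGraph V) (v : V) : Prop :=
  ¬ G.Adj v v ∧ ∃ w : V, G.neighborSet v = {w}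

/-- Delete from `G` all edges incident to the vertex `w`. -/
def deleteVertexEdges (G : LGraph V) (w : V) : LGraph V where
  Adj u v := G.Adj u v ∧ u ≠ w ∧ v ≠ w
  symm := by intro u v h; exact ⟨G.symm h.1, h.2.2, h.2.1⟩

/-- A graph is twin-free if no two distinct vertices have the same neighbourhood. -/
def TwinFree (G : LGraph V) : Prop :=
  ∀ u v : V, G.neighborSet u = G.neighborSet v → u = v

/-- `G` has a unique optimal set-join cover. -/
def HasUniqueOptimalCover (G : LGraph V) : Prop :=
  ∃! 𝒞 : Set (Sym2 (Set V)), G.IsSetJoinCover 𝒞 ∧ coverOrder 𝒞 = G.st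

/-- The cover graphs of two set-join covers are isomorphic. -/
def CoverGraphIso (𝒞 : Set (Sym2 (Set V))) (𝒟 : Set (Sym2 (Set W))) : Prop :=
  ∃ e : comps 𝒞 ≃ comps 𝒟,
    ∀ K L : comps 𝒞, (coverGraph 𝒞).Adj K L ↔ (coverGraph 𝒟).Adj (e K) (e L)

/-- All optimal set-join covers of `G` have isomorphic cover graphs. -/
def HasUniqueOSJCoverGraph (G : LGraph V) : Prop :=
  ∀ 𝒞 𝒟 : Set (Sym2 (Set V)),
    G.IsOptimalCover 𝒞 → G.IsOptimalCover 𝒟 → CoverGraphIso 𝒞 𝒟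

/-- Entrywise nonnegativity of a real matrix. -/
def EntrywiseNonneg {m n : Type*} (A : Matrix m n ℝ) : Prop :=
  ∀ i j, 0 ≤ A i j

/-- The SNT-rank `st₊(A)` of a matrix: the minimal `k` such that `A = B * C * Bᵀ`
with `B` an entrywise nonnegative `n × k` matrix and `C` a symmetric entrywise
nonnegative `k × k` matrix. -/
noncomputable def stM {V : Type*} [Fintype V] (A : Matrix V V ℝ) : ℕ :=
  sInf {k : ℕ | ∃ B : Matrix V (Fin k) ℝ, ∃ C : Matrix (Fin k) (Fin k) ℝ,
    EntrywiseNonneg B ∧ C.IsSymm ∧ EntrywiseNonneg C ∧ A = B * C * Bᵀ}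

/-- The SNT-rank `st₊(G)` of a graph defined via matrices: the minimum of
`st₊(A)` over all symmetric entrywise nonnegative matrices `A` whose pattern
graph is `G`. -/
noncomputable def stMGraph {V : Type*} [Fintype V] (G : LGraph V) : ℕ :=
  sInf {k : ℕ | ∃ A : Matrix V V ℝ, A.IsSymm ∧ EntrywiseNonneg A ∧
    (∀ i j, G.Adj i j ↔ 0 < A i j) ∧ stM A = k}

/-- The loopy graph associated with a simple graph. -/
def _root_.SimpleGraph.toLGraph (G : SimpleGraph V) : LGraph V where
  Adj := G.Adj
  symm := by intro u v h; exact G.adj_symm h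

/-- The edge star cover number `starc(G)` of a loopless simple graph: the minimal
number of stars (given by a centre and a nonempty set of leaves not containing
the centre) whose edge sets have union exactly `E(G)`. -/
noncomputable def starCoverNumber (G : SimpleGraph V) : ℕ :=
  sInf {k : ℕ | ∃ f : Fin k → V × Set V,
    (∀ i, (f i).2.Nonempty ∧ (f i).1 ∉ (f i).2) ∧
    ∀ u v : V, G.Adj u v ↔
      ∃ i, (u = (f i).1 ∧ v ∈ (f i).2) ∨ (v = (f i).1 ∧ u ∈ (f i).2)}

/-!
Stars `{v} ∨ N(v)` centred at the odd vertices cover every edge of `Pₙ` and have `2 ⌊n/2⌋`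
components. Conversely, in a graph where no two distinct vertices have two common neighbours, one
side of every set-join is a single vertex. Covering each edge `{2i, 2i+1}` of a matching by a
set-join produces `2 ⌊n/2⌋` components, and they are pairwise distinct: a component arising twice
would contain two distinct matched vertices, and their two partners would be common neighbours of
both.
-/

variable {G : LGraph V}

def IsVertexCover (G : LGraph V) (S : Set V) : Prop :=
  ∀ ⦃u v⦄, G.Adj u v → u ∈ S ∨ v ∈ S

def CommonNeighborsSubsingleton (G : LGraph V) : Prop :=
  ∀ ⦃x y : V⦄, x ≠ y → (G.neighborSet x ∩ G.neighborSet y).Subsingleton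

theorem CommonNeighborsSubsingleton.subsingleton_or_subsingleton
    (hG : G.CommonNeighborsSubsingleton) {X Y : Set V} (hXY : ∀ x ∈ X, ∀ y ∈ Y, G.Adj x y) :
    X.Subsingleton ∨ Y.Subsingleton := by
  rw [or_iff_not_imp_left, Set.not_subsingleton_iff]
  rintro ⟨x₁, hx₁, x₂, hx₂, hx⟩ y₁ hy₁ y₂ hy₂
  exact hG hx ⟨hXY x₁ hx₁ y₁ hy₁, hXY x₂ hx₂ y₁ hy₁⟩ ⟨hXY x₁ hx₁ y₂ hy₂, hXY x₂ hx₂ y₂ hy₂⟩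

theorem two_mul_card_le_coverOrder [Finite V] (hG : G.CommonNeighborsSubsingleton)
    {𝒞 : Set (Sym2 (Set V))} (h𝒞 : G.IsSetJoinCover 𝒞) {ι : Type*} [Finite ι] {a b : ι → V}
    (hab : ∀ i, G.Adj (a i) (b i)) (hinj : Function.Injective (Sum.elim a b)) :
    2 * Nat.card ι ≤ coverOrder 𝒞 := by
  choose p hp K L hpKL haK hbL using fun i => (h𝒞.2 (a i) (b i)).1 (hab i)
  have hKL : ∀ i, ∀ x ∈ K i, ∀ y ∈ L i, G.Adj x y := fun i x hx y hy =>
    (h𝒞.2 x y).2 ⟨p i, hp i, K i, L i, hpKL i, hx, hy⟩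
  set F : ι ⊕ ι → Set V := Sum.elim K L
  set F' : ι ⊕ ι → Set V := Sum.elim L K
  have hF : ∀ z, Sum.elim a b z ∈ F z := by rintro (i | i); exacts [haK i, hbL i]
  have hF' : ∀ z, Sum.elim a b z.swap ∈ F' z := by rintro (i | i); exacts [hbL i, haK i]
  have hFF' : ∀ z, ∀ x ∈ F z, ∀ y ∈ F' z, G.Adj x y := by
    rintro (i | i) x hx y hy
    exacts [hKL i x hx y hy, G.symm (hKL i y hy x hx)]
  have hF_mem : ∀ z, F z ∈ comps 𝒞 := by
    rintro (i | i)
    exacts [⟨p i, hp i, hpKL i ▸ Sym2.mem_mk_left _ _⟩, ⟨p i, hp i, hpKL i ▸ Sym2.mem_mk_right _ _⟩]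
  have hF_inj : Function.Injective F := by
    intro z w hzw
    by_contra hne
    have hjoin : ∀ x ∈ F z, ∀ y ∈ F' z ∪ F' w, G.Adj x y := by
      rintro x hx y (hy | hy)
      exacts [hFF' z x hx y hy, hFF' w x (hzw ▸ hx) y hy]
    rcases hG.subsingleton_or_subsingleton hjoin with h | h
    · exact hne (hinj (h (hF z) (hzw ▸ hF w)))
    · exact hne (Sum.swap_leftInverse.injective (hinj (h (Or.inl (hF' z)) (Or.inr (hF' w)))))
  calc 2 * Nat.card ι = Nat.card (ι ⊕ ι) := by rw [Nat.card_sum, two_mul]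
    _ ≤ Nat.card (comps 𝒞) :=
      Nat.card_le_card_of_injective (fun z => ⟨F z, hF_mem z⟩)
        fun z w h => hF_inj (congrArg Subtype.val h)
    _ = coverOrder 𝒞 := Nat.card_coe_set_eq _

def starCover (G : LGraph V) (S : Set V) : Set (Sym2 (Set V)) :=
  {p | ∃ v ∈ S, (G.neighborSet v).Nonempty ∧ p = s({v}, G.neighborSet v)}

theorem isSetJoinCover_starCover {S : Set V} (hS : G.IsVertexCover S) :
    G.IsSetJoinCover (G.starCover S) := by
  refine ⟨?_, fun u w => ⟨fun huw => ?_, ?_⟩⟩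
  · rintro _ ⟨v, -, hv, rfl⟩ K hK
    rcases Sym2.mem_iff.1 hK with rfl | rfl
    exacts [Set.singleton_nonempty v, hv]
  · rcases hS huw with hu | hw
    · exact ⟨s({u}, G.neighborSet u), ⟨u, hu, ⟨w, huw⟩, rfl⟩, _, _, rfl, rfl, huw⟩
    · exact ⟨s({w}, G.neighborSet w), ⟨w, hw, ⟨u, G.symm huw⟩, rfl⟩, _, _, Sym2.eq_swap,
        G.symm huw, rfl⟩
  · rintro ⟨_, ⟨v, -, -, rfl⟩, K, L, hKL, hu, hw⟩
    rcases Sym2.eq_iff.1 hKL with ⟨rfl, rfl⟩ | ⟨rfl, rfl⟩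
    · obtain rfl : u = v := hu
      exact hw
    · obtain rfl : w = v := hw
      exact G.symm hu

theorem coverOrder_starCover_le [Finite V] (G : LGraph V) (S : Set V) :
    coverOrder (G.starCover S) ≤ 2 * S.ncard := by
  have hsub : comps (G.starCover S) ⊆ (fun v => ({v} : Set V)) '' S ∪ G.neighborSet '' S := by
    rintro K ⟨_, ⟨v, hv, -, rfl⟩, hK⟩
    rcases Sym2.mem_iff.1 hK with rfl | rfl
    exacts [Or.inl ⟨v, hv, rfl⟩, Or.inr ⟨v, hv, rfl⟩]
  calc coverOrder (G.starCover S)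
      ≤ ((fun v => ({v} : Set V)) '' S ∪ G.neighborSet '' S).ncard := Set.ncard_le_ncard hsub
    _ ≤ ((fun v => ({v} : Set V)) '' S).ncard + (G.neighborSet '' S).ncard :=
      Set.ncard_union_le _ _
    _ ≤ S.ncard + S.ncard := add_le_add (Set.ncard_image_le) (Set.ncard_image_le)
    _ = 2 * S.ncard := (two_mul _).symm

theorem st_le_coverOrder {𝒞 : Set (Sym2 (Set V))} (h𝒞 : G.IsSetJoinCover 𝒞) :
    G.st ≤ coverOrder 𝒞 :=
  Nat.sInf_le ⟨𝒞, h𝒞, rfl⟩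

theorem exists_isOptimalCover [Finite V] (G : LGraph V) : ∃ 𝒞, G.IsOptimalCover 𝒞 :=
  Nat.sInf_mem (s := {k | ∃ 𝒞, G.IsSetJoinCover 𝒞 ∧ coverOrder 𝒞 = k})
    ⟨_, _, isSetJoinCover_starCover (S := Set.univ) fun _ _ _ => Or.inl trivial, rfl⟩

theorem st_le_two_mul_ncard [Finite V] {S : Set V} (hS : G.IsVertexCover S) :
    G.st ≤ 2 * S.ncard :=
  (st_le_coverOrder (isSetJoinCover_starCover hS)).trans (coverOrder_starCover_le G S)

theorem two_mul_card_le_st [Finite V] (hG : G.CommonNeighborsSubsingleton) {ι : Type*} [Finite ι]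
    {a b : ι → V} (hab : ∀ i, G.Adj (a i) (b i)) (hinj : Function.Injective (Sum.elim a b)) :
    2 * Nat.card ι ≤ G.st := by
  obtain ⟨𝒞, h𝒞, hord⟩ := G.exists_isOptimalCover
  exact hord ▸ two_mul_card_le_coverOrder hG h𝒞 hab hinj

theorem pathGraph_commonNeighborsSubsingleton (n : ℕ) :
    (pathGraph n).CommonNeighborsSubsingleton := by
  rintro x y hxy u ⟨hxu, hyu⟩ v ⟨hxv, hyv⟩
  have hxy' : (x : ℕ) ≠ y := Fin.val_ne_of_ne hxy
  change (x : ℕ) + 1 = u ∨ (u : ℕ) + 1 = x at hxu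
  change (y : ℕ) + 1 = u ∨ (u : ℕ) + 1 = y at hyu
  change (x : ℕ) + 1 = v ∨ (v : ℕ) + 1 = x at hxv
  change (y : ℕ) + 1 = v ∨ (v : ℕ) + 1 = y at hyv
  exact Fin.ext (by omega)

theorem st_pathGraph_eq (n : ℕ) : (pathGraph n).st = 2 * (n / 2) := by
  let a : Fin (n / 2) → Fin n := fun i => ⟨2 * i, by omega⟩
  let b : Fin (n / 2) → Fin n := fun i => ⟨2 * i + 1, by omega⟩
  have ha : Function.Injective a := fun i j h => Fin.ext (by simpa [a] using h)
  have hb : Function.Injective b := fun i j h => Fin.ext (by simpa [b] using h)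
  have hab : Function.Injective (Sum.elim a b) :=
    ha.sumElim hb fun i j h => by simp only [a, b, Fin.mk.injEq] at h; omega
  have hcover : (pathGraph n).IsVertexCover (Set.range b) := by
    have hodd : ∀ v : Fin n, (v : ℕ) % 2 = 1 → v ∈ Set.range b := fun v hv =>
      ⟨⟨v / 2, by omega⟩, Fin.ext (by simp only [b]; omega)⟩
    intro u v h
    change (u : ℕ) + 1 = v ∨ (v : ℕ) + 1 = u at h
    exact (show (u : ℕ) % 2 = 1 ∨ (v : ℕ) % 2 = 1 by omega).imp (hodd u) (hodd v)
  apply le_antisymm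
  · calc (pathGraph n).st ≤ 2 * (Set.range b).ncard := st_le_two_mul_ncard hcover
      _ = 2 * (n / 2) := by rw [Set.ncard_range_of_injective hb, Nat.card_fin]
  · simpa using
      two_mul_card_le_st (pathGraph_commonNeighborsSubsingleton n) (fun _ => Or.inl rfl) hab

theorem st_pathGraph_general (k : ℕ) :
    (pathGraph (2 * k)).st = 2 * k ∧ (pathGraph (2 * k + 1)).st = 2 * k := by
  constructor <;> rw [st_pathGraph_eq] <;> omega

/-- For paths without loops, `st₊(P_{2k}) = st₊(P_{2k+1}) = 2k`
for every `k ≥ 1`. -/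
theorem st_pathGraph (k : ℕ) (hk : 1 ≤ k) :
    (pathGraph (2 * k)).st = 2 * k ∧ (pathGraph (2 * k + 1)).st = 2 * k :=
  st_pathGraph_general k

end LGraph
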